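/- arXiv:math/0505689 — 2 statements merged into one kernel-verified Lean document; each statement's English description precedes it below -/
import Mathlib

section
/- Let M and N be finite matroids on disjoint ground sets, and let P be a matroid on E(M) ∪ E(N) whose rank function satisfies r_P(X ∪ Y) = r_M(X) + r_N(Y) + min{ r_M(E(M)) − r_M(X), |Y| − r_N(Y) } for all X ⊆ E(M) and Y ⊆ E(N) (the free product M □ N). For nonnegative integers i, j let a_{ij} be the number of sets X ⊆ E(M) with r_M(E(M)) − r_M(X) = i and |X| − r_M(X) = j, and for nonnegative integers k, l let b_{kl} be the number of sets Y ⊆ E(N) with r_N(E(N)) − r_N(Y) = k and |Y| − r_N(Y) = l. Then r_P(E(P)) = r_M(E(M)) + r_N(E(N)), and for all nonnegative integers p, q, the number of sets A ⊆ E(M) ∪ E(N) with r_P(E(P)) − r_P(A) = p and |A| − r_P(A) = q equals the sum of a_{ij}·b_{kl} over all nonnegative integers i, j, k, l satisfying i + k − min{i, l} = p and j + l − min{i, l} = q. -/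
namespace Matroid

variable {α β : Type*}

/-- A circuit of a matroid: a minimal dependent set. -/
def IsCircuit' (M : Matroid α) (C : Set α) : Prop :=
  M.Dep C ∧ ∀ D, D ⊂ C → M.Indep D

/-- A cyclic flat: a flat that is a (possibly empty) union of circuits. -/
def CyclicFlat (M : Matroid α) (X : Set α) : Prop :=
  M.IsFlat X ∧ ∀ e ∈ X, ∃ C, M.IsCircuit' C ∧ C ⊆ X ∧ e ∈ C

/-- The rank of a set: the maximum size of an independent subset. -/
noncomputable def rk (M : Matroid α) (X : Set α) : ℕ :=
  sSup {n | ∃ I, M.Indep I ∧ I ⊆ X ∧ I.ncard = n}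

/-- Deletion of a set from a matroid. -/
def del (M : Matroid α) (D : Set α) : Matroid α := M ↾ (M.E \ D)

/-- Contraction of a set in a matroid. -/
def con (M : Matroid α) (C : Set α) : Matroid α := (M✶ ↾ (M.E \ C))✶

/-- `N` is a minor of `M` if it is obtained from `M` by a contraction and a deletion. -/
def IsMinorOf (N M : Matroid α) : Prop := ∃ C D, N = (M.con C).del D

/-- Matroid isomorphism: a bijection of ground sets preserving independence. -/
def IsIsoTo (M : Matroid α) (N : Matroid β) : Prop :=
  ∃ e : M.E ≃ N.E, ∀ I : Set M.E,
    M.Indep (Subtype.val '' I) ↔ N.Indep (Subtype.val '' (e '' I))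

end Matroid

/-!
Splitting `A ⊆ E(M) ∪ E(N)` as `X ∪ Y` with `X ⊆ E(M)`, `Y ⊆ E(N)` is a bijection onto pairs
`(X, Y)`. By the rank formula of the free product, if `X` has corank `i` and nullity `j` in `M` and
`Y` has corank `k` and nullity `l` in `N`, then `X ∪ Y` has corank `i + k - min i l` and nullity
`j + l - min i l` in `P`. Counting the pairs fibrewise over `(i, j, k, l)` turns the count for `P`
into the stated convolution of the counts for `M` and `N`.
-/

theorem Set.Finite.ncard_eq_finsum_ncard_fiber {β ι : Type*} {s : Set β} (hs : s.Finite)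
    (φ : β → ι) : s.ncard = ∑ᶠ w, {x ∈ s | φ x = w}.ncard := by
  classical
  rw [finsum_eq_sum_of_support_subset (s := hs.toFinset.image φ), Set.ncard_eq_toFinset_card _ hs,
    Finset.card_eq_sum_card_image φ]
  · refine Finset.sum_congr rfl fun w _ => ?_
    rw [← Set.ncard_coe_finset]
    congr 1
    ext x
    simp
  · intro w hw
    obtain ⟨x, hxs, rfl⟩ := Set.nonempty_of_ncard_ne_zero hw
    simpa using ⟨x, hxs, rfl⟩

theorem finsum_prod_prod {α β γ δ M : Type*} [AddCommMonoid M] (f : (α × β) × (γ × δ) → M)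
    (hf : (Function.support f).Finite) : ∑ᶠ w, f w = ∑ᶠ (a) (b) (c) (d), f ((a, b), (c, d)) := by
  have hfst : (Function.support fun u => ∑ᶠ v, f (u, v)).Finite := by
    refine (hf.image Prod.fst).subset fun u hu => ?_
    by_contra hu'
    exact hu (finsum_eq_zero_of_forall_eq_zero fun v => by_contra fun hv => hu' ⟨(u, v), hv, rfl⟩)
  rw [finsum_curry f hf, finsum_curry _ hfst]
  refine finsum_congr fun a => finsum_congr fun b => finsum_curry _ ?_
  exact (hf.preimage (Prod.mk_right_injective (a, b)).injOn).subset fun v hv => hv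

theorem Set.ncard_prod_filter_eq_finsum {β γ ι κ : Type*} {s : Set β} {t : Set γ}
    (hs : s.Finite) (ht : t.Finite) (φ : β → ι) (ψ : γ → κ) (c : ι → κ → Prop)
    [∀ i k, Decidable (c i k)] :
    {z ∈ s ×ˢ t | c (φ z.1) (ψ z.2)}.ncard =
      ∑ᶠ w : ι × κ, if c w.1 w.2 then
        {x ∈ s | φ x = w.1}.ncard * {y ∈ t | ψ y = w.2}.ncard else 0 := by
  rw [((hs.prod ht).subset (Set.sep_subset _ _)).ncard_eq_finsum_ncard_fiber
    fun z => (φ z.1, ψ z.2)]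
  refine finsum_congr fun ⟨i, k⟩ => ?_
  split_ifs with hw
  · rw [← Set.ncard_prod]
    congr 1
    ext ⟨x, y⟩
    simp only [Set.mem_ofPred_eq, Set.mem_prod, Prod.ext_iff]
    constructor
    · rintro ⟨⟨⟨hx, hy⟩, -⟩, h1, h2⟩
      exact ⟨⟨hx, h1⟩, hy, h2⟩
    · rintro ⟨⟨hx, rfl⟩, hy, rfl⟩
      exact ⟨⟨⟨hx, hy⟩, hw⟩, rfl, rfl⟩
  · convert Set.ncard_empty (β × γ)
    ext ⟨x, y⟩
    simp only [Set.mem_ofPred_eq, Set.mem_empty_iff_false, iff_false, Prod.mk.injEq]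
    rintro ⟨⟨-, h⟩, rfl, rfl⟩
    exact hw h

theorem Set.ncard_prod_filter_eq_finsum₄ {β γ ι₁ ι₂ κ₁ κ₂ : Type*} {s : Set β} {t : Set γ}
    (hs : s.Finite) (ht : t.Finite) (φ : β → ι₁ × ι₂) (ψ : γ → κ₁ × κ₂)
    (c : ι₁ × ι₂ → κ₁ × κ₂ → Prop) [∀ i k, Decidable (c i k)] :
    {z ∈ s ×ˢ t | c (φ z.1) (ψ z.2)}.ncard =
      ∑ᶠ (i₁) (i₂) (k₁) (k₂), if c (i₁, i₂) (k₁, k₂) then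
        {x ∈ s | φ x = (i₁, i₂)}.ncard * {y ∈ t | ψ y = (k₁, k₂)}.ncard else 0 := by
  rw [Set.ncard_prod_filter_eq_finsum hs ht, finsum_prod_prod]
  refine ((hs.image φ).prod (ht.image ψ)).subset fun ⟨i, k⟩ hw => ?_
  obtain ⟨-, hx, hy⟩ : c i k ∧ _ ≠ 0 ∧ _ ≠ 0 := by
    simpa only [Function.mem_support, ne_eq, ite_eq_right_iff, mul_eq_zero, not_or,
      Classical.not_imp] using hw
  obtain ⟨x, hxs, rfl⟩ := Set.nonempty_of_ncard_ne_zero hx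
  obtain ⟨y, hyt, rfl⟩ := Set.nonempty_of_ncard_ne_zero hy
  exact ⟨⟨x, hxs, rfl⟩, ⟨y, hyt, rfl⟩⟩

theorem Set.union_inter_eq_left_of_disjoint {α : Type*} {X Y E₁ E₂ : Set α}
    (h : Disjoint E₁ E₂) (hX : X ⊆ E₁) (hY : Y ⊆ E₂) : (X ∪ Y) ∩ E₁ = X := by
  rw [Set.union_inter_distrib_right, Set.inter_eq_left.2 hX, (h.symm.mono_left hY).inter_eq,
    Set.union_empty]

theorem Set.ncard_setOf_subset_union {α : Type*} {E₁ E₂ : Set α} (h : Disjoint E₁ E₂)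
    (Q : Set α → Prop) :
    {A | A ⊆ E₁ ∪ E₂ ∧ Q A}.ncard = {z ∈ E₁.powerset ×ˢ E₂.powerset | Q (z.1 ∪ z.2)}.ncard := by
  symm
  refine Set.ncard_congr (fun z _ => z.1 ∪ z.2) ?_ ?_ ?_
  · rintro ⟨X, Y⟩ ⟨⟨hX, hY⟩, hQ⟩
    exact ⟨Set.union_subset_union hX hY, hQ⟩
  · rintro ⟨X, Y⟩ ⟨X', Y'⟩ ⟨⟨hX : X ⊆ E₁, hY : Y ⊆ E₂⟩, -⟩ ⟨⟨hX' : X' ⊆ E₁, hY' : Y' ⊆ E₂⟩, -⟩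
      (hXY : X ∪ Y = X' ∪ Y')
    have hYX : Y ∪ X = Y' ∪ X' := by rw [Set.union_comm, hXY, Set.union_comm]
    rw [Prod.mk.injEq, ← Set.union_inter_eq_left_of_disjoint h hX hY, hXY,
      Set.union_inter_eq_left_of_disjoint h hX' hY',
      ← Set.union_inter_eq_left_of_disjoint h.symm hY hX, hYX,
      Set.union_inter_eq_left_of_disjoint h.symm hY' hX']
    exact ⟨rfl, rfl⟩
  · rintro A ⟨hA, hQ⟩
    have hA' : A ∩ E₁ ∪ A ∩ E₂ = A := by
      rw [← Set.inter_union_distrib_left, Set.inter_eq_left.2 hA]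
    refine ⟨(A ∩ E₁, A ∩ E₂), ⟨⟨Set.inter_subset_right, Set.inter_subset_right⟩, ?_⟩, hA'⟩
    rwa [hA']

namespace Matroid

variable {α : Type*}

theorem rk_le_ncard (M : Matroid α) {X : Set α} (hX : X.Finite) : M.rk X ≤ X.ncard :=
  csSup_le ⟨0, ∅, M.empty_indep, Set.empty_subset X, Set.ncard_empty α⟩ fun _ ⟨_, _, hIX, hn⟩ =>
    hn ▸ Set.ncard_le_ncard hIX hX

theorem rk_mono (M : Matroid α) {X Y : Set α} (hXY : X ⊆ Y) (hY : Y.Finite) :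
    M.rk X ≤ M.rk Y :=
  csSup_le_csSup ⟨Y.ncard, fun _ ⟨_, _, hIY, hn⟩ => hn ▸ Set.ncard_le_ncard hIY hY⟩
    ⟨0, ∅, M.empty_indep, Set.empty_subset X, Set.ncard_empty α⟩
    fun _ ⟨I, hI, hIX, hn⟩ => ⟨I, hI, hIX.trans hXY, hn⟩

-- Truncated subtraction, exact on subsets of the ground set of a finite matroid
-- (`natCast_corank`, `natCast_nullity`).
noncomputable def corank (M : Matroid α) (X : Set α) : ℕ := M.rk M.E - M.rk X

noncomputable def nullity (M : Matroid α) (X : Set α) : ℕ := X.ncard - M.rk X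

theorem natCast_corank (M : Matroid α) [M.Finite] {X : Set α} (hX : X ⊆ M.E) :
    (M.corank X : ℤ) = M.rk M.E - M.rk X :=
  Nat.cast_sub (M.rk_mono hX M.ground_finite)

theorem natCast_nullity (M : Matroid α) {X : Set α} (hX : X.Finite) :
    (M.nullity X : ℤ) = X.ncard - M.rk X :=
  Nat.cast_sub (M.rk_le_ncard hX)

theorem sep_powerset_corank_nullity_eq (M : Matroid α) [M.Finite] (i j : ℕ) :
    {X ∈ M.E.powerset | (M.corank X, M.nullity X) = (i, j)} =
      {X | X ⊆ M.E ∧ (M.rk M.E : ℤ) - M.rk X = i ∧ (X.ncard : ℤ) - M.rk X = j} := by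
  ext X
  simp only [Set.mem_ofPred_eq, Set.mem_powerset_iff, Prod.mk.injEq, and_congr_right_iff]
  intro hX
  rw [← M.natCast_corank hX, ← M.natCast_nullity (M.ground_finite.subset hX), Nat.cast_inj,
    Nat.cast_inj]

def IsFreeProduct (P M N : Matroid α) : Prop :=
  P.E = M.E ∪ N.E ∧ ∀ X ⊆ M.E, ∀ Y ⊆ N.E,
    (P.rk (X ∪ Y) : ℤ) = (M.rk X : ℤ) + (N.rk Y : ℤ) +
      min ((M.rk M.E : ℤ) - (M.rk X : ℤ)) ((Y.ncard : ℤ) - (N.rk Y : ℤ))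

namespace IsFreeProduct

variable {P M N : Matroid α} {X Y : Set α}

theorem rk_ground [N.Finite] (h : P.IsFreeProduct M N) : P.rk P.E = M.rk M.E + N.rk N.E := by
  have hrk := h.2 M.E subset_rfl N.E subset_rfl
  have hN := N.rk_le_ncard N.ground_finite
  rw [h.1]
  omega

theorem corank_union [M.Finite] [N.Finite] (h : P.IsFreeProduct M N) (hX : X ⊆ M.E)
    (hY : Y ⊆ N.E) :
    (P.rk P.E : ℤ) - P.rk (X ∪ Y) =
      M.corank X + N.corank Y - min (M.corank X : ℤ) (N.nullity Y) := by
  rw [M.natCast_corank hX, N.natCast_corank hY, N.natCast_nullity (N.ground_finite.subset hY),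
    h.rk_ground, h.2 X hX Y hY]
  push_cast
  ring

theorem nullity_union [M.Finite] [N.Finite] (h : P.IsFreeProduct M N) (hdisj : Disjoint M.E N.E)
    (hX : X ⊆ M.E) (hY : Y ⊆ N.E) :
    ((X ∪ Y).ncard : ℤ) - P.rk (X ∪ Y) =
      M.nullity X + N.nullity Y - min (M.corank X : ℤ) (N.nullity Y) := by
  have hXfin := M.ground_finite.subset hX
  have hYfin := N.ground_finite.subset hY
  rw [M.natCast_corank hX, M.natCast_nullity hXfin, N.natCast_nullity hYfin, h.2 X hX Y hY,
    Set.ncard_union_eq (hdisj.mono hX hY) hXfin hYfin]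
  push_cast
  ring

end IsFreeProduct

end Matroid

/-- The Whitney rank generating function (hence the Tutte polynomial) of the free product is
determined by those of its factors: with `a i j` and `b k l` the rank-nullity counts of `M`
and `N`, the count of subsets of `E(P)` with corank `p` and nullity `q` is
`∑ a i j * b k l` over `i + k - min i l = p` and `j + l - min i l = q`. -/
theorem free_product_tutte {α : Type*} (M N : Matroid α) [M.Finite] [N.Finite]
    (hdisj : Disjoint M.E N.E) (P : Matroid α) (hPE : P.E = M.E ∪ N.E)
    (hPr : ∀ X ⊆ M.E, ∀ Y ⊆ N.E,
      (P.rk (X ∪ Y) : ℤ) = (M.rk X : ℤ) + (N.rk Y : ℤ) +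
        min ((M.rk M.E : ℤ) - (M.rk X : ℤ)) ((Y.ncard : ℤ) - (N.rk Y : ℤ))) :
    P.rk P.E = M.rk M.E + N.rk N.E ∧
    ∀ p q : ℕ,
      {A : Set α | A ⊆ M.E ∪ N.E ∧ (P.rk P.E : ℤ) - (P.rk A : ℤ) = p ∧
          (A.ncard : ℤ) - (P.rk A : ℤ) = q}.ncard =
        ∑ᶠ (i : ℕ) (j : ℕ) (k : ℕ) (l : ℕ),
          (if (i : ℤ) + k - min (i : ℤ) (l : ℤ) = p ∧
              (j : ℤ) + l - min (i : ℤ) (l : ℤ) = q then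
            {X : Set α | X ⊆ M.E ∧ (M.rk M.E : ℤ) - (M.rk X : ℤ) = i ∧
                (X.ncard : ℤ) - (M.rk X : ℤ) = j}.ncard *
              {Y : Set α | Y ⊆ N.E ∧ (N.rk N.E : ℤ) - (N.rk Y : ℤ) = k ∧
                (Y.ncard : ℤ) - (N.rk Y : ℤ) = l}.ncard
          else 0) := by
  have hP : P.IsFreeProduct M N := ⟨hPE, hPr⟩
  refine ⟨hP.rk_ground, fun p q => ?_⟩
  simp_rw [← Matroid.sep_powerset_corank_nullity_eq]
  rw [Set.ncard_setOf_subset_union hdisj]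
  convert Set.ncard_prod_filter_eq_finsum₄ M.ground_finite.powerset N.ground_finite.powerset
    (fun X => (M.corank X, M.nullity X)) (fun Y => (N.corank Y, N.nullity Y))
    (fun ij kl => (ij.1 : ℤ) + kl.1 - min (ij.1 : ℤ) kl.2 = p ∧
      (ij.2 : ℤ) + kl.2 - min (ij.1 : ℤ) kl.2 = q) using 2
  ext ⟨X, Y⟩
  simp only [Set.mem_ofPred_eq, Set.mem_prod, Set.mem_powerset_iff, and_congr_right_iff]
  rintro ⟨hX, hY⟩
  rw [hP.corank_union hX hY, hP.nullity_union hdisj hX hY]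
end

section
/- For every infinite sequence M_0, M_1, M_2, … of finite matroids, each of whose set of cyclic flats is a chain under inclusion (any two cyclic flats are comparable), there exist indices i < j such that M_i is isomorphic to a minor of M_j. That is, the class of nested matroids is well-quasi-ordered by the minor relation. -/
/-!
Ordering the ground set suitably, a finite nested matroid becomes the matroid of a word
`w : List Bool` (a lattice path): a set is independent iff, for every `k`, at most as many of its
elements lie among the first `k` as there are letters `true` among the first `k` letters. Such an
order is built by removing one element at a time: either a coloop (letter `true`) or, failing
that, an element outside the largest proper cyclic flat, which is free in the matroid (letter
`false`). Contracting an element with letter `true`, or deleting one with letter `false`, erases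
its letter, so subwords give minors; Higman's lemma for words over `Bool` gives the result.
-/

lemma List.exists_lt_sublist {γ : Type*} [Finite γ] (w : ℕ → List γ) :
    ∃ i j, i < j ∧ (w i).Sublist (w j) := by
  have hpwo : (Set.univ : Set γ).PartiallyWellOrderedOn (· = ·) :=
    Set.finite_univ.partiallyWellOrderedOn
  obtain ⟨i, j, hij, h⟩ := (hpwo.partiallyWellOrderedOn_sublistForall₂ (· = ·)).exists_lt
    (f := w) fun _ _ _ => Set.mem_univ _
  obtain ⟨l, hl, hsub⟩ := List.sublistForall₂_iff.1 h
  rw [List.forall₂_eq_eq_eq] at hl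
  exact ⟨i, j, hij, hl ▸ hsub⟩

lemma List.Sublist.exists_sublist_eraseIdx {γ : Type*} {l₁ l₂ : List γ} (h : l₁.Sublist l₂)
    (hne : l₁ ≠ l₂) : ∃ p < l₂.length, l₁.Sublist (l₂.eraseIdx p) := by
  induction h with
  | slnil => exact absurd rfl hne
  | cons _ _ _ => exact ⟨0, by simp, by simpa⟩
  | cons_cons _ _ ih =>
    obtain ⟨p, hp, h⟩ := ih fun heq => hne (heq ▸ rfl)
    exact ⟨p + 1, by simpa, by simpa using h⟩

namespace Matroid

open Set

variable {α β : Type*} {M : Matroid α} {C D X I : Set α} {e x : α} {w : List Bool} {f : α → ℕ}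
  {k p : ℕ}

lemma isCircuit'_iff : M.IsCircuit' C ↔ M.IsCircuit C := by
  rw [IsCircuit', isCircuit_def, minimal_iff_forall_ssubset]
  refine and_congr_right fun hC => forall₂_congr fun D hD => ?_
  rw [not_dep_iff (hD.subset.trans hC.subset_ground)]

lemma cyclicFlat_iff :
    M.CyclicFlat X ↔ M.IsFlat X ∧ ∀ e ∈ X, ∃ C ⊆ X, M.IsCircuit C ∧ e ∈ C := by
  simp only [CyclicFlat, isCircuit'_iff]
  exact and_congr_right fun _ => forall₂_congr fun _ _ =>
    ⟨fun ⟨C, hC, hCX, heC⟩ => ⟨C, hCX, hC, heC⟩, fun ⟨C, hCX, hC, heC⟩ => ⟨C, hC, hCX, heC⟩⟩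

lemma cyclicFlat_closure (h : ∀ e ∈ X, ∃ C ⊆ X, M.IsCircuit C ∧ e ∈ C) :
    M.CyclicFlat (M.closure X) := by
  have hXE : X ⊆ M.E := fun e he =>
    let ⟨_, _, hC, heC⟩ := h e he
    hC.subset_ground heC
  refine cyclicFlat_iff.2 ⟨M.isFlat_closure X, fun e he => ?_⟩
  by_cases heX : e ∈ X
  · obtain ⟨C, hCX, hC, heC⟩ := h e heX
    exact ⟨C, hCX.trans (M.subset_closure X), hC, heC⟩
  · obtain ⟨C, hCX, hC, heC⟩ := exists_isCircuit_of_mem_closure he heX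
    exact ⟨C, hCX.trans (insert_subset he (M.subset_closure X)), hC, heC⟩

def Nested (M : Matroid α) : Prop :=
  ∀ X Y, M.CyclicFlat X → M.CyclicFlat Y → X ⊆ Y ∨ Y ⊆ X

lemma CyclicFlat.closure_of_delete (hX : (M ＼ D).CyclicFlat X) :
    M.CyclicFlat (M.closure X) ∧ M.closure X \ D = X := by
  rw [cyclicFlat_iff] at hX
  obtain ⟨hflat, hcirc⟩ := hX
  have hXD : Disjoint X D := (subset_sdiff.1 hflat.subset_ground).2
  refine ⟨cyclicFlat_closure fun e he => ?_, ?_⟩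
  · obtain ⟨C, hCX, hC, heC⟩ := hcirc e he
    exact ⟨C, hCX, (delete_isCircuit_iff.1 hC).1, heC⟩
  · rw [← delete_closure_eq_of_disjoint M hXD, hflat.closure]

lemma Nested.delete (hM : M.Nested) (D : Set α) : (M ＼ D).Nested := by
  intro X Y hX hY
  obtain ⟨hX', hXeq⟩ := hX.closure_of_delete
  obtain ⟨hY', hYeq⟩ := hY.closure_of_delete
  rw [← hXeq, ← hYeq]
  exact (hM _ _ hX' hY').imp sdiff_subset_sdiff_left sdiff_subset_sdiff_left

lemma Nested.exists_isColoop_or_forall_spanning [M.Finite] (hM : M.Nested)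
    (hE : M.E.Nonempty) :
    ∃ e ∈ M.E, M.IsColoop e ∨ ¬ M.IsColoop e ∧ ∀ C, M.IsCircuit C → e ∈ C → M.Spanning C := by
  by_cases hcol : ∃ e ∈ M.E, M.IsColoop e
  · obtain ⟨e, he, hcol⟩ := hcol
    exact ⟨e, he, .inl hcol⟩
  push Not at hcol
  -- The proper cyclic flats form a finite chain, so they all lie in one, which misses some `e`.
  obtain ⟨e, he, hfree⟩ : ∃ e ∈ M.E, ∀ F, M.CyclicFlat F → e ∈ F → F = M.E := by
    by_contra! h
    have hfin : {F | M.CyclicFlat F ∧ F ≠ M.E}.Finite :=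
      M.ground_finite.finite_subsets.subset fun F hF => hF.1.1.subset_ground
    obtain ⟨x, hx⟩ := hE
    obtain ⟨F₀, hF₀, -, hF₀E⟩ := h x hx
    obtain ⟨F, hF, hmax⟩ := hfin.exists_maximal ⟨F₀, hF₀, hF₀E⟩
    refine hF.2 (hF.1.1.subset_ground.antisymm fun y hy => ?_)
    obtain ⟨G, hG, hyG, hGE⟩ := h y hy
    exact (hM G F hG hF.1).elim (· hyG) fun hFG => hmax ⟨hG, hGE⟩ hFG hyG
  refine ⟨e, he, .inr ⟨hcol e he, fun C hC heC => ⟨?_, hC.subset_ground⟩⟩⟩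
  exact hfree _ (cyclicFlat_closure fun x hx => ⟨C, subset_rfl, hC, hx⟩)
    (M.subset_closure C hC.subset_ground heC)

lemma indep_iff_of_forall_isCircuit_spanning [M.RankFinite] (he : e ∈ M.E)
    (hsp : ∀ C, M.IsCircuit C → e ∈ C → M.Spanning C) :
    M.Indep I ↔ (M ＼ {e}).Indep (I \ {e}) ∧ I.encard ≤ M.eRank := by
  rw [delete_indep_iff, and_iff_left disjoint_sdiff_left]
  refine ⟨fun hI => ⟨hI.subset sdiff_subset, hI.encard_le_eRank⟩, fun ⟨hIe, hcard⟩ => ?_⟩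
  -- A circuit `C ⊆ I` must contain `e`; then `C \ {e}` is a base, so `I` is too large.
  by_contra hI
  have hIE : I ⊆ M.E := by
    simpa [insert_eq_of_mem he] using sdiff_singleton_subset_iff.1 hIe.subset_ground
  obtain ⟨C, hCI, hC⟩ := (dep_iff.2 ⟨hI, hIE⟩).exists_isCircuit_subset
  have heC : e ∈ C := by_contra fun heC =>
    hC.not_indep (hIe.subset (subset_sdiff_singleton hCI heC))
  have hB : M.IsBase (C \ {e}) := (hC.sdiff_singleton_indep heC).isBase_of_spanning <| by
    rw [spanning_iff_closure_eq (sdiff_subset.trans hC.subset_ground),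
      hC.closure_sdiff_singleton_eq, (hsp C hC heC).closure_eq]
  refine (ENat.add_one_le_iff (M.eRank_ne_top_iff.2 ‹_›)).1 ?_ |>.false
  calc M.eRank + 1 = C.encard := by rw [← hB.encard_eq_eRank, encard_sdiff_singleton_add_one heC]
    _ ≤ I.encard := encard_le_encard hCI
    _ ≤ M.eRank := hcard

/-- The rank of the first `k` elements of the word matroid of `w`. -/
def prefixRank (w : List Bool) (k : ℕ) : ℕ := (w.take k).count true

lemma prefixRank_eq_card_filter (w : List Bool) (k : ℕ) :
    prefixRank w k = ((Finset.range k).filter (fun m => w.getD m false = true)).card := by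
  induction k with
  | zero => simp [prefixRank]
  | succ k ih =>
    rw [prefixRank, List.take_add_one, List.count_append, ← prefixRank, ih,
      Finset.range_add_one, Finset.filter_insert, List.getD_eq_getElem?_getD]
    cases w[k]? with
    | none => simp
    | some b => cases b <;> simp

lemma prefixRank_of_length_le (hk : w.length ≤ k) : prefixRank w k = prefixRank w w.length := by
  rw [prefixRank, prefixRank, List.take_of_length_le hk, List.take_length]

lemma prefixRank_append_of_le_length {u : List Bool} (hk : k ≤ w.length) :
    prefixRank (w ++ u) k = prefixRank w k := by
  rw [prefixRank, prefixRank, List.take_append_of_le_length hk]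

lemma prefixRank_append_singleton (b : Bool) :
    prefixRank (w ++ [b]) (w.length + 1) = prefixRank w w.length + b.toNat := by
  rw [prefixRank, List.take_of_length_le (by simp), List.count_append, prefixRank,
    List.take_length]
  cases b <;> simp

lemma prefixRank_eraseIdx_of_le (hk : k ≤ p) : prefixRank (w.eraseIdx p) k = prefixRank w k := by
  rw [prefixRank, prefixRank, List.take_eraseIdx_eq_take_of_le w k p hk]

lemma prefixRank_succ_eq_eraseIdx (hp : p < w.length) (hk : p ≤ k) :
    prefixRank w (k + 1) = prefixRank (w.eraseIdx p) k + w[p].toNat := by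
  obtain ⟨j, rfl⟩ := Nat.exists_eq_add_of_le hk
  rw [prefixRank, prefixRank, List.eraseIdx_eq_take_drop_succ, List.take_append,
    List.length_take_of_le hp.le, List.take_take, min_eq_right (by omega), Nat.add_sub_cancel_left,
    Nat.add_right_comm, List.take_add, List.take_add_one, List.getElem?_eq_getElem hp]
  cases w[p] <;> simp [List.count_append]; omega

def WordIndep (w : List Bool) (f : α → ℕ) (I : Set α) : Prop :=
  ∀ k, (I ∩ f ⁻¹' Iio k).ncard ≤ prefixRank w k

lemma wordIndep_iff_forall_le_length (hI : ∀ x ∈ I, f x < w.length) :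
    WordIndep w f I ↔ ∀ k ≤ w.length, (I ∩ f ⁻¹' Iio k).ncard ≤ prefixRank w k := by
  refine ⟨fun h k _ => h k, fun h k => ?_⟩
  obtain hk | hk := le_total k w.length
  · exact h k hk
  have hI' : ∀ j ≥ w.length, I ∩ f ⁻¹' Iio j = I :=
    fun j hj => inter_eq_left.2 fun x hx => (hI x hx).trans_le hj
  rw [hI' k hk, prefixRank_of_length_le hk, ← hI' _ le_rfl]
  exact h _ le_rfl

lemma WordIndep.ncard_le (h : WordIndep w f I) (hI : ∀ x ∈ I, f x < w.length) :
    I.ncard ≤ prefixRank w w.length := by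
  have h' := h w.length
  rwa [inter_eq_left.2 (show I ⊆ f ⁻¹' Iio w.length from hI)] at h'

lemma wordIndep_of_forall_getD (hinj : InjOn f I)
    (h : ∀ x ∈ I, w.getD (f x) false = true) : WordIndep w f I := by
  intro k
  rw [prefixRank_eq_card_filter, ← (hinj.mono inter_subset_left).ncard_image,
    ← ncard_coe_finset]
  refine ncard_le_ncard ?_ (Finset.finite_toSet _)
  rintro - ⟨x, ⟨hxI, hxk⟩, rfl⟩
  simpa using ⟨hxk, h x hxI⟩

lemma wordIndep_append_singleton_iff [DecidableEq α] (b : Bool)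
    (hI : ∀ x ∈ I \ {e}, f x < w.length) :
    WordIndep (w ++ [b]) (Function.update f e w.length) I ↔
      WordIndep w f (I \ {e}) ∧ I.ncard ≤ prefixRank w w.length + b.toNat := by
  set g := Function.update f e w.length
  have hg : ∀ x ∈ I, g x < w.length + 1 := by
    intro x hx
    obtain rfl | hxe := eq_or_ne x e
    · simp [g]
    · simpa [g, hxe] using (hI x ⟨hx, hxe⟩).trans (Nat.lt_succ_self _)
  have hlow : ∀ k ≤ w.length, I ∩ g ⁻¹' Iio k = (I \ {e}) ∩ f ⁻¹' Iio k := by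
    intro k hk
    ext x
    obtain rfl | hxe := eq_or_ne x e
    · simpa [g] using fun _ => hk
    · simp [g, hxe]
  have htop : I ∩ g ⁻¹' Iio (w.length + 1) = I := inter_eq_left.2 hg
  rw [wordIndep_iff_forall_le_length (by simpa using hg), wordIndep_iff_forall_le_length hI,
    List.length_append, List.length_singleton]
  constructor
  · intro h
    refine ⟨fun k hk => ?_, ?_⟩
    · simpa [hlow k hk, prefixRank_append_of_le_length hk] using h k (by omega)
    · simpa [htop, prefixRank_append_singleton] using h _ le_rfl
  · rintro ⟨h, hcard⟩ k hk
    obtain hk | rfl := Nat.le_succ_iff.1 hk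
    · simpa [hlow k hk, prefixRank_append_of_le_length hk] using h k hk
    · simpa [htop, prefixRank_append_singleton] using hcard

def dropLabel (p m : ℕ) : ℕ := if m < p then m else m - 1

lemma dropLabel_lt_iff_of_le {m : ℕ} (hm : m ≠ p) (hk : k ≤ p) : dropLabel p m < k ↔ m < k := by
  unfold dropLabel; split_ifs <;> omega

lemma dropLabel_lt_iff_of_ge {m : ℕ} (hm : m ≠ p) (hk : p ≤ k) :
    dropLabel p m < k ↔ m < k + 1 := by
  unfold dropLabel; split_ifs <;> omega

lemma bijOn_dropLabel {n : ℕ} (hp : p < n) :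
    BijOn (dropLabel p) (Iio n \ {p}) (Iio (n - 1)) := by
  refine ⟨fun m hm => ?_, fun m hm m' hm' h => ?_, fun m hm => ?_⟩
  · simp only [mem_sdiff, mem_Iio, mem_singleton_iff] at hm
    simp only [dropLabel, mem_Iio]; split_ifs <;> omega
  · simp only [mem_sdiff, mem_Iio, mem_singleton_iff] at hm hm'
    simp only [dropLabel] at h; split_ifs at h <;> omega
  · simp only [mem_Iio] at hm
    by_cases hmp : m < p
    · exact ⟨m, by simp; omega, by simp [dropLabel, hmp]⟩
    · exact ⟨m + 1, by simp; omega, by simp [dropLabel]; omega⟩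

lemma wordIndep_eraseIdx_iff (hI : ∀ x ∈ I, f x ≠ p) :
    WordIndep (w.eraseIdx p) (dropLabel p ∘ f) I ↔
      (∀ k ≤ p, (I ∩ f ⁻¹' Iio k).ncard ≤ prefixRank w k) ∧
      ∀ k ≥ p, (I ∩ f ⁻¹' Iio (k + 1)).ncard ≤ prefixRank (w.eraseIdx p) k := by
  have hlow : ∀ k ≤ p, I ∩ (dropLabel p ∘ f) ⁻¹' Iio k = I ∩ f ⁻¹' Iio k := fun k hk => by
    ext x; simpa using fun hx => dropLabel_lt_iff_of_le (hI x hx) hk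
  have hhigh : ∀ k ≥ p, I ∩ (dropLabel p ∘ f) ⁻¹' Iio k = I ∩ f ⁻¹' Iio (k + 1) := fun k hk => by
    ext x; simpa using fun hx => dropLabel_lt_iff_of_ge (hI x hx) hk
  refine ⟨fun h => ⟨fun k hk => ?_, fun k hk => ?_⟩, fun ⟨h₁, h₂⟩ k => ?_⟩
  · simpa [hlow k hk, prefixRank_eraseIdx_of_le hk] using h k
  · simpa [hhigh k hk] using h k
  · obtain hk | hk := le_total k p
    · simpa [hlow k hk, prefixRank_eraseIdx_of_le hk] using h₁ k hk
    · simpa [hhigh k hk] using h₂ k hk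

lemma wordIndep_iff_forall_le_and_ge :
    WordIndep w f I ↔ (∀ k ≤ p, (I ∩ f ⁻¹' Iio k).ncard ≤ prefixRank w k) ∧
      ∀ k ≥ p, (I ∩ f ⁻¹' Iio (k + 1)).ncard ≤ prefixRank w (k + 1) := by
  refine ⟨fun h => ⟨fun k _ => h k, fun k _ => h (k + 1)⟩, fun ⟨h₁, h₂⟩ k => ?_⟩
  obtain hk | hk := le_or_gt k p
  · exact h₁ k hk
  · obtain ⟨k, rfl⟩ := Nat.exists_eq_add_of_lt hk
    exact h₂ _ (by omega)

lemma wordIndep_eraseIdx_iff_of_false (hp : p < w.length) (hwp : w[p] = false)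
    (hI : ∀ x ∈ I, f x ≠ p) :
    WordIndep (w.eraseIdx p) (dropLabel p ∘ f) I ↔ WordIndep w f I := by
  rw [wordIndep_eraseIdx_iff hI, wordIndep_iff_forall_le_and_ge (p := p)]
  refine and_congr_right fun _ => forall₂_congr fun k hk => ?_
  rw [prefixRank_succ_eq_eraseIdx hp hk, hwp, Bool.toNat_false, add_zero]

lemma wordIndep_eraseIdx_iff_of_true (hp : p < w.length) (hwp : w[p] = true) (hx : f x = p)
    (hI : ∀ y ∈ I, f y ≠ p) (hIfin : I.Finite) :
    WordIndep (w.eraseIdx p) (dropLabel p ∘ f) I ↔ WordIndep w f (insert x I) := by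
  have hxI : x ∉ I := fun h => hI x h hx
  have hlow : ∀ k ≤ p, insert x I ∩ f ⁻¹' Iio k = I ∩ f ⁻¹' Iio k := fun k hk => by
    rw [insert_inter_of_notMem (by simpa [hx] using hk)]
  have hhigh : ∀ k ≥ p,
      (insert x I ∩ f ⁻¹' Iio (k + 1)).ncard = (I ∩ f ⁻¹' Iio (k + 1)).ncard + 1 := fun k hk => by
    rw [insert_inter_of_mem (by simp [hx]; omega),
      ncard_insert_of_notMem (fun h => hxI h.1) (hIfin.subset inter_subset_left)]
  rw [wordIndep_eraseIdx_iff hI, wordIndep_iff_forall_le_and_ge (p := p)]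
  refine and_congr (forall₂_congr fun k hk => by rw [hlow k hk]) (forall₂_congr fun k hk => ?_)
  rw [hhigh k hk, prefixRank_succ_eq_eraseIdx hp hk, hwp, Bool.toNat_true,
    Nat.add_le_add_iff_right]

/-- Labelling the ground set by `f` presents `M` as the nested matroid of the lattice path `w`:
the element labelled `i` is the `i`-th step, which raises the rank iff `w[i] = true`. -/
structure IsWordRep (M : Matroid α) (w : List Bool) (f : α → ℕ) : Prop where
  bijOn : BijOn f M.E (Iio w.length)
  indep_iff : ∀ ⦃I⦄, I ⊆ M.E → (M.Indep I ↔ WordIndep w f I)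

lemma isWordRep_nil (hE : M.E = ∅) (f : α → ℕ) : M.IsWordRep [] f := by
  refine ⟨by simp [hE], fun I hI => ?_⟩
  obtain rfl := subset_empty_iff.1 (hE ▸ hI)
  simp [WordIndep]

namespace IsWordRep

lemma ground_finite (h : M.IsWordRep w f) : M.E.Finite :=
  Finite.of_finite_image (by rw [h.bijOn.image_eq]; exact finite_Iio _) h.bijOn.injOn

lemma ncard_le_of_indep (h : M.IsWordRep w f) (hI : M.Indep I) :
    I.ncard ≤ prefixRank w w.length :=
  ((h.indep_iff hI.subset_ground).1 hI).ncard_le fun _ hx => h.bijOn.mapsTo (hI.subset_ground hx)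

lemma eRank_eq (h : M.IsWordRep w f) : M.eRank = prefixRank w w.length := by
  set T := M.E ∩ f ⁻¹' {m | w.getD m false = true}
  have hT : M.Indep T := (h.indep_iff inter_subset_left).2 <|
    wordIndep_of_forall_getD (h.bijOn.injOn.mono inter_subset_left) fun x hx => hx.2
  have hTcard : T.ncard = prefixRank w w.length := by
    have himg :
        f '' T = ((Finset.range w.length).filter (fun m => w.getD m false = true) : Set ℕ) := by
      rw [image_inter_preimage, h.bijOn.image_eq]; ext; simp
    rw [prefixRank_eq_card_filter, ← ncard_coe_finset, ← himg,
      (h.bijOn.injOn.mono inter_subset_left).ncard_image]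
  refine le_antisymm ?_ ?_
  · rw [← eRk_ground, eRk_le_iff]
    intro I hI hIind
    rw [← (h.ground_finite.subset hI).cast_ncard_eq, Nat.cast_le]
    exact h.ncard_le_of_indep hIind
  · rw [← hTcard, (h.ground_finite.subset inter_subset_left).cast_ncard_eq]
    exact hT.encard_le_eRank

section Update

variable [DecidableEq α]

lemma append_singleton_of_delete (h : (M ＼ {e}).IsWordRep w f) (he : e ∈ M.E) (b : Bool)
    (hind : ∀ ⦃I⦄, I ⊆ M.E →
      (M.Indep I ↔ (M ＼ {e}).Indep (I \ {e}) ∧ I.ncard ≤ prefixRank w w.length + b.toNat)) :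
    M.IsWordRep (w ++ [b]) (Function.update f e w.length) := by
  refine ⟨?_, fun I hI => ?_⟩
  · have hbij : BijOn (Function.update f e w.length) (M.E \ {e}) (Iio w.length) :=
      h.bijOn.congr fun x hx => (Function.update_of_ne hx.2 _ _).symm
    have hins := hbij.insert (a := e) (by simp)
    rwa [insert_sdiff_singleton, insert_eq_of_mem he, Function.update_self,
      show insert w.length (Iio w.length) = Iio (w ++ [b]).length by ext; simp] at hins
  · rw [hind hI, h.indep_iff (sdiff_subset_sdiff_left hI),
      wordIndep_append_singleton_iff b fun x hx => h.bijOn.mapsTo ⟨hI hx.1, hx.2⟩]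

lemma append_true_of_delete_isColoop (h : (M ＼ {e}).IsWordRep w f) (he : M.IsColoop e) :
    M.IsWordRep (w ++ [true]) (Function.update f e w.length) := by
  refine h.append_singleton_of_delete he.mem_ground true fun I hI => ?_
  rw [delete_indep_iff, and_iff_left disjoint_sdiff_left,
    sdiff_indep_iff_indep_of_subset_coloops (singleton_subset_iff.2 he), iff_self_and]
  intro hIind
  have hIe : (M ＼ {e}).Indep (I \ {e}) :=
    delete_indep_iff.2 ⟨hIind.subset sdiff_subset, disjoint_sdiff_left⟩
  calc I.ncard ≤ (I \ {e}).ncard + ({e} : Set α).ncard := ncard_le_ncard_sdiff_add_ncard _ _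
    _ ≤ prefixRank w w.length + true.toNat := by
      rw [ncard_singleton, Bool.toNat_true]
      exact Nat.add_le_add_right (h.ncard_le_of_indep hIe) 1

lemma append_false_of_delete [M.Finite] (h : (M ＼ {e}).IsWordRep w f) (he : e ∈ M.E)
    (hcol : ¬ M.IsColoop e) (hsp : ∀ C, M.IsCircuit C → e ∈ C → M.Spanning C) :
    M.IsWordRep (w ++ [false]) (Function.update f e w.length) := by
  have hrank : M.eRank = prefixRank w w.length := by
    rw [← h.eRank_eq, delete_eq_restrict, Spanning.eRank_restrict]
    simpa [isColoop_iff_sdiff_not_spanning] using hcol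
  refine h.append_singleton_of_delete he false fun I hI => ?_
  rw [indep_iff_of_forall_isCircuit_spanning he hsp, hrank,
    ← (M.ground_finite.subset hI).cast_ncard_eq, Nat.cast_le, Bool.toNat_false, add_zero]

end Update

end IsWordRep

theorem Nested.exists_isWordRep {M : Matroid α} [M.Finite] (hM : M.Nested) :
    ∃ (w : List Bool) (f : α → ℕ), M.IsWordRep w f := by
  classical
  obtain hE | hE := M.E.eq_empty_or_nonempty
  · exact ⟨[], fun _ => 0, isWordRep_nil hE _⟩
  obtain ⟨e, he, hcol | ⟨hcol, hsp⟩⟩ := hM.exists_isColoop_or_forall_spanning hE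
  · obtain ⟨w, f, h⟩ := (hM.delete {e}).exists_isWordRep
    exact ⟨_, _, h.append_true_of_delete_isColoop hcol⟩
  · obtain ⟨w, f, h⟩ := (hM.delete {e}).exists_isWordRep
    exact ⟨_, _, h.append_false_of_delete he hcol hsp⟩
termination_by M.E.ncard
decreasing_by all_goals exact ncard_sdiff_singleton_lt_of_mem he M.ground_finite

namespace IsWordRep

lemma exists_isMinor_eraseIdx (h : M.IsWordRep w f) (hp : p < w.length) :
    ∃ N, N ≤m M ∧ N.IsWordRep (w.eraseIdx p) (dropLabel p ∘ f) := by
  obtain ⟨x, hxE, hx⟩ := h.bijOn.surjOn (mem_Iio.2 hp)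
  have hbij : BijOn (dropLabel p ∘ f) (M.E \ {x}) (Iio (w.eraseIdx p).length) := by
    rw [List.length_eraseIdx_of_lt hp]
    exact (bijOn_dropLabel hp).comp (hx ▸ h.bijOn.sdiff_singleton hxE)
  have hlabel : ∀ ⦃I⦄, I ⊆ M.E \ {x} → ∀ y ∈ I, f y ≠ p := fun I hI y hy hyp =>
    (hI hy).2 (h.bijOn.injOn (hI hy).1 hxE (hyp.trans hx.symm))
  cases hwp : w[p]
  · refine ⟨M ＼ {x}, ⟨∅, {x}, by simp⟩, hbij, fun I hI => ?_⟩
    rw [wordIndep_eraseIdx_iff_of_false hp hwp (hlabel hI), delete_indep_iff,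
      ← h.indep_iff (hI.trans sdiff_subset), and_iff_left (subset_sdiff.1 hI).2]
  · have hxind : M.Indep {x} := (h.indep_iff (singleton_subset_iff.2 hxE)).2 <|
      wordIndep_of_forall_getD (injOn_singleton _ _)
        (by simp [hx, List.getElem?_eq_getElem hp, hwp])
    refine ⟨M ／ {x}, ⟨{x}, ∅, by simp⟩, hbij, fun I hI => ?_⟩
    have hIE : I ⊆ M.E := hI.trans sdiff_subset
    rw [wordIndep_eraseIdx_iff_of_true hp hwp hx (hlabel hI) (h.ground_finite.subset hIE),
      hxind.contract_indep_iff, union_singleton, ← h.indep_iff (insert_subset hxE hIE),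
      and_iff_right (subset_sdiff.1 hI).2]

theorem exists_isMinor_of_sublist {M : Matroid α} {w w' : List Bool} {f : α → ℕ}
    (h : M.IsWordRep w f) (hw : w'.Sublist w) :
    ∃ N, N ≤m M ∧ ∃ g, N.IsWordRep w' g := by
  obtain rfl | hne := eq_or_ne w' w
  · exact ⟨M, IsMinor.refl, f, h⟩
  obtain ⟨p, hp, hsub⟩ := hw.exists_sublist_eraseIdx hne
  obtain ⟨N, hNM, hN⟩ := h.exists_isMinor_eraseIdx hp
  obtain ⟨N', hN'N, g, hN'⟩ := hN.exists_isMinor_of_sublist hsub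
  exact ⟨N', hN'N.trans hNM, g, hN'⟩
termination_by w.length
decreasing_by rw [List.length_eraseIdx_of_lt hp]; omega

theorem isIsoTo {M₁ : Matroid α} {M₂ : Matroid β} {f₁ : α → ℕ} {f₂ : β → ℕ}
    (h₁ : M₁.IsWordRep w f₁) (h₂ : M₂.IsWordRep w f₂) : M₁.IsIsoTo M₂ := by
  set e := (h₁.bijOn.equiv f₁).trans (h₂.bijOn.equiv f₂).symm
  have he : ∀ x, f₂ (e x) = f₁ x := fun x =>
    congrArg Subtype.val ((h₂.bijOn.equiv f₂).apply_symm_apply (h₁.bijOn.equiv f₁ x))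
  refine ⟨e, fun I => ?_⟩
  rw [h₁.indep_iff (Subtype.coe_image_subset _ _), h₂.indep_iff (Subtype.coe_image_subset _ _)]
  suffices hcard : ∀ S : Set ℕ,
      (Subtype.val '' (e '' I) ∩ f₂ ⁻¹' S).ncard = (Subtype.val '' I ∩ f₁ ⁻¹' S).ncard by
    simp only [WordIndep, hcard]
  intro S
  have hpre : e ⁻¹' (Subtype.val ⁻¹' (f₂ ⁻¹' S)) = Subtype.val ⁻¹' (f₁ ⁻¹' S) := by
    ext x; simp [he]
  rw [← image_inter_preimage, ← image_inter_preimage, ← image_inter_preimage, hpre,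
    ncard_image_of_injective _ Subtype.val_injective, ncard_image_of_injective _ e.injective,
    ncard_image_of_injective _ Subtype.val_injective]

end IsWordRep

end Matroid

/-- Nested matroids (finite matroids whose cyclic flats form a chain) are well-quasi-ordered
by the minor relation: in any infinite sequence of them, some earlier term is isomorphic to a
minor of a later term. -/
theorem nested_matroids_wqo (α : ℕ → Type) (M : ∀ n, Matroid (α n))
    (hfin : ∀ n, (M n).Finite)
    (hchain : ∀ n, ∀ X Y : Set (α n),
      (M n).CyclicFlat X → (M n).CyclicFlat Y → X ⊆ Y ∨ Y ⊆ X) :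
    ∃ i j, i < j ∧ ∃ N : Matroid (α j), N.IsMinorOf (M j) ∧ (M i).IsIsoTo N := by
  choose w f hw using fun n => have := hfin n; Matroid.Nested.exists_isWordRep (hchain n)
  obtain ⟨i, j, hij, hsub⟩ := List.exists_lt_sublist w
  obtain ⟨N, hNM, g, hN⟩ := (hw j).exists_isMinor_of_sublist hsub
  exact ⟨i, j, hij, N, hNM, (hw i).isIsoTo hN⟩
end
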